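/- arXiv:math/0312161 — 2 statements merged into one kernel-verified Lean document; each statement's English description precedes it below -/
import Mathlib

section
/- Let α : [0.8, 1] → ℝ be differentiable with √2 < α'(x) < 2 for all x ∈ [0.8,1], let 0 < ε₁ and set α̂(x) = α(x) − (ε₁/3)x. Suppose x ∈ [0.8,1] is such that x, α̂(x), α̂²(x), α(x), α²(x) all lie in [0.8,1]. Then 0.8·(2 + √2 + 1)·(ε₁/3) ≤ α³(x) − α̂³(x) ≤ (2² + 2 + 1)·(ε₁/3), and hence 1.1·ε₁ < α³(x) − α̂³(x) < 2.4·ε₁. -/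
/-!
Write `α̂ = α - μ·id` with `μ = ε₁/3`. The deviation `dₙ = αⁿ(x) - α̂ⁿ(x)` satisfies
`dₙ₊₁ = (α(αⁿ x) - α(α̂ⁿ x)) + μ·α̂ⁿ(x)`, so by the mean value theorem
`√2·dₙ + 0.8μ ≤ dₙ₊₁ ≤ 2·dₙ + μ` as long as the iterates stay in `[0.8, 1]`.
Starting from `d₀ = 0` this gives `0.8μ(1 + √2 + 2) ≤ d₃ ≤ μ(1 + 2 + 4)`.
-/

open Set Finset

variable {f g : ℝ → ℝ} {p q m M μ : ℝ}

lemma mul_sub_le_image_sub_and_image_sub_le_mul_sub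
    (hdiff : ∀ y ∈ Icc p q, DifferentiableAt ℝ f y)
    (hm : ∀ y ∈ Icc p q, m ≤ deriv f y) (hM : ∀ y ∈ Icc p q, deriv f y ≤ M)
    {u v : ℝ} (hu : u ∈ Icc p q) (hv : v ∈ Icc p q) (huv : u ≤ v) :
    m * (v - u) ≤ f v - f u ∧ f v - f u ≤ M * (v - u) := by
  have hcont : ContinuousOn f (Icc p q) := fun y hy =>
    (hdiff y hy).continuousAt.continuousWithinAt
  have hdiff' : DifferentiableOn ℝ f (interior (Icc p q)) := fun y hy =>
    (hdiff y (interior_subset hy)).differentiableWithinAt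
  exact ⟨(convex_Icc p q).mul_sub_le_image_sub_of_le_deriv hcont hdiff'
      (fun y hy => hm y (interior_subset hy)) u hu v hv huv,
    (convex_Icc p q).image_sub_le_mul_sub_of_deriv_le hcont hdiff'
      (fun y hy => hM y (interior_subset hy)) u hu v hv huv⟩

lemma sub_shifted_mem_Icc (hg : ∀ y, g y = f y - μ * y) (hμ : 0 ≤ μ) (hm0 : 0 ≤ m)
    (hdiff : ∀ y ∈ Icc p q, DifferentiableAt ℝ f y)
    (hm : ∀ y ∈ Icc p q, m ≤ deriv f y) (hM : ∀ y ∈ Icc p q, deriv f y ≤ M)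
    {a b L U : ℝ} (ha : a ∈ Icc p q) (hb : b ∈ Icc p q) (hL : 0 ≤ L)
    (hab : a - b ∈ Icc L U) :
    f a - g b ∈ Icc (m * L + μ * p) (M * U + μ * q) := by
  obtain ⟨hlo, hhi⟩ := mul_sub_le_image_sub_and_image_sub_le_mul_sub hdiff hm hM hb ha
    (by linarith [hab.1])
  have hM0 : 0 ≤ M := hm0.trans ((hm a ha).trans (hM a ha))
  have hsplit : f a - g b = (f a - f b) + μ * b := by rw [hg]; ring
  rw [hsplit]
  constructor
  · linarith [mul_le_mul_of_nonneg_left hab.1 hm0, mul_le_mul_of_nonneg_left hb.1 hμ]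
  · linarith [mul_le_mul_of_nonneg_left hab.2 hM0, mul_le_mul_of_nonneg_left hb.2 hμ]

theorem iterate_sub_iterate_shifted_mem_Icc (hg : ∀ y, g y = f y - μ * y) (hμ : 0 ≤ μ)
    (hp : 0 ≤ p) (hm0 : 0 ≤ m) (hdiff : ∀ y ∈ Icc p q, DifferentiableAt ℝ f y)
    (hm : ∀ y ∈ Icc p q, m ≤ deriv f y) (hM : ∀ y ∈ Icc p q, deriv f y ≤ M)
    {x : ℝ} {n : ℕ} (hiter : ∀ k < n, f^[k] x ∈ Icc p q ∧ g^[k] x ∈ Icc p q) :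
    f^[n] x - g^[n] x ∈
      Icc (μ * p * ∑ k ∈ range n, m ^ k) (μ * q * ∑ k ∈ range n, M ^ k) := by
  induction n with
  | zero => simp
  | succ n ih =>
    obtain ⟨hf, hg'⟩ := hiter n n.lt_succ_self
    have hdn := ih fun k hk => hiter k (hk.trans n.lt_succ_self)
    have hL : 0 ≤ μ * p * ∑ k ∈ range n, m ^ k :=
      mul_nonneg (mul_nonneg hμ hp) (sum_nonneg fun k _ => pow_nonneg hm0 k)
    have hstep := sub_shifted_mem_Icc hg hμ hm0 hdiff hm hM hf hg' hL hdn
    rw [Function.iterate_succ_apply', Function.iterate_succ_apply', geom_sum_succ,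
      geom_sum_succ]
    convert hstep using 2 <;> ring

/-- Three-iterate deviation estimate between α and the shifted map α̂ = α − (ε₁/3)·id
on [0.8,1]: 0.8(2+√2+1)(ε₁/3) ≤ α³(x) − α̂³(x) ≤ (2²+2+1)(ε₁/3), hence the deviation
lies strictly between 1.1·ε₁ and 2.4·ε₁. -/
theorem stmt7 (α ah : ℝ → ℝ) (ε₁ : ℝ) (hε : 0 < ε₁)
    (hah : ∀ y, ah y = α y - ε₁ / 3 * y)
    (hdiff : ∀ y ∈ Set.Icc (0.8 : ℝ) 1, DifferentiableAt ℝ α y)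
    (hderiv : ∀ y ∈ Set.Icc (0.8 : ℝ) 1, Real.sqrt 2 < deriv α y ∧ deriv α y < 2)
    (x : ℝ) (hx : x ∈ Set.Icc (0.8 : ℝ) 1)
    (h1 : ah x ∈ Set.Icc (0.8 : ℝ) 1) (h2 : ah^[2] x ∈ Set.Icc (0.8 : ℝ) 1)
    (h3 : α x ∈ Set.Icc (0.8 : ℝ) 1) (h4 : α^[2] x ∈ Set.Icc (0.8 : ℝ) 1) :
    (0.8 * (2 + Real.sqrt 2 + 1) * (ε₁ / 3) ≤ α^[3] x - ah^[3] x ∧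
      α^[3] x - ah^[3] x ≤ (2 ^ 2 + 2 + 1) * (ε₁ / 3)) ∧
    (1.1 * ε₁ < α^[3] x - ah^[3] x ∧ α^[3] x - ah^[3] x < 2.4 * ε₁) := by
  have hiter : ∀ k < 3, α^[k] x ∈ Icc (0.8 : ℝ) 1 ∧ ah^[k] x ∈ Icc (0.8 : ℝ) 1 := by
    intro k hk
    interval_cases k
    exacts [⟨hx, hx⟩, ⟨h3, h1⟩, ⟨h4, h2⟩]
  have hd := iterate_sub_iterate_shifted_mem_Icc hah (by positivity) (by norm_num)
    (Real.sqrt_nonneg 2) hdiff (fun y hy => (hderiv y hy).1.le)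
    (fun y hy => (hderiv y hy).2.le) hiter
  have hsqrt_sq : Real.sqrt 2 ^ 2 = 2 := Real.sq_sqrt (by norm_num)
  have hsqrt_gt : (1.125 : ℝ) < Real.sqrt 2 := by
    rw [Real.lt_sqrt (by norm_num)]; norm_num
  norm_num only [sum_range_succ, range_zero, sum_empty, pow_zero, pow_one, hsqrt_sq,
    Set.mem_Icc] at hd
  refine ⟨⟨by linarith [hd.1], by linarith [hd.2]⟩, ?_, by linarith [hd.2]⟩
  linarith [hd.1, mul_lt_mul_of_pos_left hsqrt_gt hε]
end

section
/- Under the same hypotheses on α as in the one-dimensional shadowing proposition, for every ε > 0 there exist δ > 0 and μ > 0 such that every finite δ-pseudo-orbit {x_n}_{n=0}^{m} of α̂ = α − μ·id with terminal point x_m = 0 is ε/8-shadowed by an actual orbit hitting 0 exactly at time m: there exists z with α^n(z) ≠ 0 for 0 ≤ n ≤ m−1, α^m(z) = 0, and |α^n(z) − x_n| ≤ ε/8 for 0 ≤ n ≤ m. -/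
open Set Filter
set_option maxHeartbeats 2000000

private lemma stepPos (α : ℝ → ℝ)
    (hcont : ∀ x ∈ Set.Ioc (0:ℝ) 1, ContinuousAt α x)
    (hmono : ∀ u v : ℝ, 0 < u → u ≤ v → v ≤ 1 → α u + Real.sqrt 2 * (v - u) ≤ α v)
    (hlim : Filter.Tendsto α (nhdsWithin 0 (Set.Ioi 0)) (nhds (-1 : ℝ)))
    (r : ℝ) (hr : 0 < r)
    (x₀ y : ℝ) (hx₀0 : 0 < x₀) (hx₀1 : x₀ ≤ 1)
    (hy1 : -1 < y) (hy2 : y ≤ α 1)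
    (hclose : |y - α x₀| ≤ Real.sqrt 2 * r) :
    ∃ z, 0 < z ∧ z ≤ 1 ∧ α z = y ∧ |z - x₀| ≤ r := by
  have hs2 : Real.sqrt 2 ^ 2 = 2 := Real.sq_sqrt (by norm_num)
  have hsl : (1.414 : ℝ) < Real.sqrt 2 := by
    nlinarith [Real.sqrt_nonneg 2]
  rcases le_or_gt (α x₀) y with hc | hc
  · set v := min 1 (x₀ + r) with hv
    have hx₀v : x₀ ≤ v := le_min hx₀1 (by linarith)
    have hv1 : v ≤ 1 := min_le_left _ _
    have hvr : v ≤ x₀ + r := min_le_right _ _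
    have hyv : y ≤ α v := by
      rcases le_or_gt (x₀ + r) 1 with h1 | h1
      · have hveq : v = x₀ + r := min_eq_right h1
        have h2 := hmono x₀ (x₀ + r) hx₀0 (by linarith) h1
        have h3 := abs_le.mp hclose
        rw [hveq]; nlinarith
      · have hveq : v = 1 := min_eq_left (by linarith)
        rw [hveq]; exact hy2
    have hcont' : ContinuousOn α (Icc x₀ v) := fun t ht =>
      (hcont t ⟨lt_of_lt_of_le hx₀0 ht.1, le_trans ht.2 hv1⟩).continuousWithinAt
    obtain ⟨z, hz, hzz⟩ := intermediate_value_Icc hx₀v hcont' ⟨hc, hyv⟩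
    refine ⟨z, lt_of_lt_of_le hx₀0 hz.1, le_trans hz.2 hv1, hzz, ?_⟩
    rw [abs_le]
    constructor <;> nlinarith [hz.1, hz.2]
  · have hyev : ∀ᶠ u in nhdsWithin 0 (Set.Ioi 0), α u < y :=
      hlim.eventually_lt_const hy1
    have hmem : Set.Ioo (0:ℝ) x₀ ∈ nhdsWithin 0 (Set.Ioi 0) :=
      Ioo_mem_nhdsGT_of_mem ⟨le_refl 0, hx₀0⟩
    obtain ⟨u, hu1, hu2⟩ := (hyev.and (eventually_of_mem hmem (fun _ h => h))).exists
    have hcont' : ContinuousOn α (Icc u x₀) := fun t ht =>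
      (hcont t ⟨lt_of_lt_of_le hu2.1 ht.1, le_trans ht.2 hx₀1⟩).continuousWithinAt
    obtain ⟨z, hz, hzz⟩ := intermediate_value_Icc hu2.2.le hcont' ⟨hu1.le, hc.le⟩
    have hz0 : 0 < z := lt_of_lt_of_le hu2.1 hz.1
    have hbd := hmono z x₀ hz0 hz.2 hx₀1
    rw [hzz] at hbd
    have h3 := abs_le.mp hclose
    refine ⟨z, hz0, le_trans hz.2 hx₀1, hzz, ?_⟩
    rw [abs_le]
    constructor <;> nlinarith [hz.2]

private lemma claimA (α : ℝ → ℝ)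
    (hmono : ∀ u v : ℝ, 0 < u → u ≤ v → v ≤ 1 → α u + Real.sqrt 2 * (v - u) ≤ α v)
    (ha8 : 0.8 < α (α 1)) (hab : α (α 1) < α 1) (ha1 : α 1 < 1)
    (μ : ℝ) (hμ0 : 0 < μ) (hμ1 : μ ≤ 1/1000)
    (m n : ℕ) (x Z : ℕ → ℝ) (hnm : n < m)
    (hx0 : 0 < x n)
    (hxm : ∀ k, k ≤ m → -1 ≤ x k ∧ x k ≤ 1)
    (hps : ∀ k, k < m → |α (x k) - μ * x k - x (k+1)| ≤ μ/100)
    (hZ : ∀ k, n + 1 ≤ k → k ≤ m → (-1 ≤ Z k ∧ Z k ≤ 1) ∧ |Z k - x k| ≤ 3*μ)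
    (hlink : ∀ k, n + 1 ≤ k → k < m → α (Z k) = Z (k+1))
    (hZm : Z m = 0) :
    Z (n+1) ≤ α 1 := by
  by_contra hcon
  push_neg at hcon
  have hs2 : Real.sqrt 2 ^ 2 = 2 := Real.sq_sqrt (by norm_num)
  have hsl : (1.414 : ℝ) < Real.sqrt 2 := by nlinarith [Real.sqrt_nonneg 2]
  have hsu : Real.sqrt 2 < 1.415 := by nlinarith [Real.sqrt_nonneg 2]
  set s := Real.sqrt 2 with hs
  have hspos : (0:ℝ) < s := by linarith
  have ha0 : (0.8:ℝ) < α 1 := lt_trans ha8 hab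
  have hn1m : n + 1 < m := by
    by_contra h
    have hmeq : m = n + 1 := by omega
    rw [hmeq] at hZm; linarith
  have hxn1 : x n ≤ 1 := (hxm n hnm.le).2
  -- bounds at n+1
  have hZ1 := hZ (n+1) le_rfl hn1m.le
  have hZx1 := abs_le.mp hZ1.2
  have hZub1 : Z (n+1) ≤ 1 := hZ1.1.2
  have hps0 := abs_le.mp (hps n hnm)
  have hkey1 := hmono (x n) 1 hx0 hxn1 le_rfl
  have hP1 : 0 ≤ s * (1 - x n) := mul_nonneg hspos.le (by linarith)
  have haxn : α (x n) ≤ α 1 := by linarith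
  have hP3 : 0 < μ * x n := mul_pos hμ0 hx0
  -- x n is close to 1 : s*(1 - x n) ≤ α 1 - α (x n) ≤ 3.01 μ - μ x n ≤ 3.01 μ
  have hP2 : 1.414 * (1 - x n) ≤ s * (1 - x n) :=
    mul_le_mul_of_nonneg_right hsl.le (by linarith)
  have hxnlow : 1 - 2.13 * μ ≤ x n := by linarith
  have hxnlow' : (0.997:ℝ) ≤ x n := by linarith
  have hm0 : μ * 0.997 ≤ μ * x n := mul_le_mul_of_nonneg_left hxnlow' hμ0.le
  -- G1 := α 1 - x (n+1)
  have hG1low : μ * x n - μ/100 ≤ α 1 - x (n+1) := by linarith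
  have hG1low' : 0.987 * μ ≤ α 1 - x (n+1) := by linarith
  have hG1pos : 0 < α 1 - x (n+1) := by linarith
  have hx1low : α 1 - 3*μ ≤ x (n+1) := by linarith
  have hx1pos : 0 < x (n+1) := by linarith
  -- Z (n+2)
  have hl1 := hlink (n+1) le_rfl hn1m
  have hmm1 := hmono (α 1) (Z (n+1)) (by linarith) hcon.le hZub1
  rw [hl1] at hmm1
  have hQ1 : 0 < s * (Z (n+1) - α 1) := mul_pos hspos (by linarith)
  have hZ2gt : α (α 1) < Z (n+2) := by linarith
  have hn2m : n + 2 < m := by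
    by_contra h
    have hmeq : m = n + 2 := by omega
    rw [hmeq] at hZm
    have h0 : Z (n+2) = 0 := hZm
    linarith
  have hZ2 := hZ (n+2) (by omega) hn2m.le
  have hZx2 := abs_le.mp hZ2.2
  have hZub2 : Z (n+2) ≤ 1 := hZ2.1.2
  have hps1 := abs_le.mp (hps (n+1) hn1m)
  have hax1 := hmono (x (n+1)) (α 1) hx1pos (by linarith) ha1.le
  have hm1 : μ * 0.797 ≤ μ * x (n+1) := by
    calc μ * 0.797 ≤ μ * (α 1 - 3*μ) :=
          mul_le_mul_of_nonneg_left (by linarith) hμ0.le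
      _ ≤ μ * x (n+1) := mul_le_mul_of_nonneg_left hx1low hμ0.le
  -- G2 := α (α 1) - x (n+2)
  have hG2low : s * (α 1 - x (n+1)) + μ * x (n+1) - μ/100 ≤ α (α 1) - x (n+2) := by
    linarith
  have hsG1 : s * (0.987 * μ) ≤ s * (α 1 - x (n+1)) :=
    mul_le_mul_of_nonneg_left hG1low' hspos.le
  have hsG1' : 1.414 * (0.987 * μ) ≤ s * (0.987 * μ) :=
    mul_le_mul_of_nonneg_right hsl.le (by positivity)
  have hG2low' : 2.182 * μ ≤ α (α 1) - x (n+2) := by linarith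
  have hG2pos : 0 < α (α 1) - x (n+2) := by linarith
  have hx2low : α (α 1) - 3*μ ≤ x (n+2) := by linarith
  have hx2pos : 0 < x (n+2) := by linarith
  have hab1 : α (α 1) ≤ 1 := by linarith
  have hax2 := hmono (x (n+2)) (α (α 1)) hx2pos (by linarith) hab1
  have hm2 : μ * 0.797 ≤ μ * x (n+2) := by
    calc μ * 0.797 ≤ μ * (α (α 1) - 3*μ) :=
          mul_le_mul_of_nonneg_left (by linarith) hμ0.le
      _ ≤ μ * x (n+2) := mul_le_mul_of_nonneg_left hx2low hμ0.le
  -- Z (n+3)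
  have hl2 := hlink (n+2) (by omega) hn2m
  have hmm2 := hmono (α (α 1)) (Z (n+2)) (by linarith) hZ2gt.le hZub2
  rw [hl2] at hmm2
  have hQ2 : 0 < s * (Z (n+2) - α (α 1)) := mul_pos hspos (by linarith)
  have hZ3gt : α (α (α 1)) < Z (n+3) := by linarith
  have hZ3 := hZ (n+3) (by omega) (by omega)
  have hZx3 := abs_le.mp hZ3.2
  have hps2 := abs_le.mp (hps (n+2) hn2m)
  -- combine: s*G2 + μ * x (n+2) < 3.01 μ
  have hfin : s * (α (α 1) - x (n+2)) + μ * x (n+2) < 3*μ + μ/100 := by linarith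
  -- numeric contradiction
  have hsG2 : s * (2.182 * μ) ≤ s * (α (α 1) - x (n+2)) :=
    mul_le_mul_of_nonneg_left hG2low' hspos.le
  have hsG2' : 1.414 * (2.182 * μ) ≤ s * (2.182 * μ) :=
    mul_le_mul_of_nonneg_right hsl.le (by positivity)
  linarith

private lemma claimB (α : ℝ → ℝ)
    (hodd : ∀ x : ℝ, x ≠ 0 → α (-x) = -α x)
    (hmono : ∀ u v : ℝ, 0 < u → u ≤ v → v ≤ 1 → α u + Real.sqrt 2 * (v - u) ≤ α v)
    (ha8 : 0.8 < α (α 1)) (hab : α (α 1) < α 1) (ha1 : α 1 < 1)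
    (μ : ℝ) (hμ0 : 0 < μ) (hμ1 : μ ≤ 1/1000)
    (m n : ℕ) (x Z : ℕ → ℝ) (hnm : n < m)
    (hxm : ∀ k, k ≤ m → -1 ≤ x k ∧ x k ≤ 1)
    (hps : ∀ k, k < m → |α (x k) - μ * x k - x (k+1)| ≤ μ/100)
    (hZ : ∀ k, n + 1 ≤ k → k ≤ m → (-1 ≤ Z k ∧ Z k ≤ 1) ∧ |Z k - x k| ≤ 3*μ)
    (hlink : ∀ k, n + 1 ≤ k → k < m → α (Z k) = Z (k+1))
    (hZm : Z m = 0) :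
    -1 < Z (n+1) := by
  by_contra hcon
  push_neg at hcon
  have hs2 : Real.sqrt 2 ^ 2 = 2 := Real.sq_sqrt (by norm_num)
  have hsl : (1.414 : ℝ) < Real.sqrt 2 := by nlinarith [Real.sqrt_nonneg 2]
  have hsu : Real.sqrt 2 < 1.415 := by nlinarith [Real.sqrt_nonneg 2]
  set s := Real.sqrt 2 with hs
  have hspos : (0:ℝ) < s := by linarith
  have ha0 : (0.8:ℝ) < α 1 := lt_trans ha8 hab
  have hn1m : n + 1 < m := by
    by_contra h
    have hmeq : m = n + 1 := by omega
    rw [hmeq] at hZm; linarith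
  have hZ1 := hZ (n+1) le_rfl hn1m.le
  have hZeq : Z (n+1) = -1 := le_antisymm hcon hZ1.1.1
  have hZx1 := abs_le.mp hZ1.2
  have hx1ub : x (n+1) ≤ -1 + 3*μ := by
    have := (hxm (n+1) hn1m.le).1; linarith [hZx1.1]
  have hx1lb : -1 ≤ x (n+1) := (hxm (n+1) hn1m.le).1
  -- Z (n+2) = α (-1) = -α 1
  have hl1 := hlink (n+1) le_rfl hn1m
  have hZ2eq : Z (n+2) = -(α 1) := by
    rw [← hl1, hZeq, show (-1 : ℝ) = -(1:ℝ) from rfl, hodd 1 one_ne_zero]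
  have hn2m : n + 2 < m := by
    by_contra h
    have hmeq : m = n + 2 := by omega
    rw [hmeq] at hZm
    have h0 : Z (n+2) = 0 := hZm
    rw [hZ2eq] at h0; linarith
  have hZ2 := hZ (n+2) (by omega) hn2m.le
  have hZx2 := abs_le.mp hZ2.2
  -- x (n+2) bounds
  have hps1 := abs_le.mp (hps (n+1) hn1m)
  -- α (x (n+1)) = -α (-(x (n+1))) ≥ -α 1
  have hx1ne : -(x (n+1)) ≠ 0 := by
    intro h; have : x (n+1) = 0 := by linarith [neg_eq_zero.mp h]
    rw [this] at hx1ub; linarith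
  have hax1 : α (x (n+1)) = - α (-(x (n+1))) := by
    have := hodd (-(x (n+1))) hx1ne
    rw [neg_neg] at this; linarith
  have hax1ub : α (-(x (n+1))) ≤ α 1 := by
    have h0 : 0 < -(x (n+1)) := by linarith
    have := hmono (-(x (n+1))) 1 h0 (by linarith) le_rfl
    have hP : 0 ≤ s * (1 - -(x (n+1))) := mul_nonneg hspos.le (by linarith)
    linarith
  have hax1lb : -(α 1) ≤ α (x (n+1)) := by rw [hax1]; linarith
  -- x (n+2) ≥ -α1 + μ(1-3μ) - μ/100 ; H2 := x (n+2) + α 1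
  have hmx1 : μ * (1 - 3*μ) ≤ μ * (-(x (n+1))) :=
    mul_le_mul_of_nonneg_left (by linarith) hμ0.le
  have hmono_num : μ * (1 - 3*μ) ≥ 0.989 * μ := by nlinarith
  have hH2low : 0.979 * μ ≤ x (n+2) + α 1 := by
    have h2 := hps1.2
    have : μ * (-(x (n+1))) = - (μ * x (n+1)) := by ring
    linarith
  have hH2ub : x (n+2) + α 1 ≤ 3*μ := by
    rw [hZ2eq] at hZx2; linarith [hZx2.2]
  have hx2neg : x (n+2) < 0 := by linarith
  have hx2pos' : 0 < -(x (n+2)) := by linarith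
  -- α (x (n+2)) = -α(-(x (n+2))), -(x (n+2)) = α 1 - H2
  have hx2ne : -(x (n+2)) ≠ 0 := by positivity
  have hax2 : α (x (n+2)) = - α (-(x (n+2))) := by
    have := hodd (-(x (n+2))) hx2ne
    rw [neg_neg] at this; linarith
  have hax2ub : α (-(x (n+2))) + s * (α 1 - -(x (n+2))) ≤ α (α 1) :=
    hmono (-(x (n+2))) (α 1) hx2pos' (by linarith) ha1.le
  -- Z(n+3) = α(-(α 1)) = - α (α 1)
  have hl2 := hlink (n+2) (by omega) hn2m
  have hZ3eq : Z (n+3) = -(α (α 1)) := by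
    rw [← hl2, hZ2eq, hodd (α 1) (by linarith)]
  have hn3m : n + 3 < m := by
    by_contra h
    have hmeq : m = n + 3 := by omega
    rw [hmeq] at hZm
    have h0 : Z (n+3) = 0 := hZm
    rw [hZ3eq] at h0; linarith
  have hZ3 := hZ (n+3) (by omega) hn3m.le
  have hZx3 := abs_le.mp hZ3.2
  have hps2 := abs_le.mp (hps (n+2) hn2m)
  -- x (n+3) ≥ -α(α1) + s*H2 + μ(α1 - 3μ) - μ/100 where H2 = x(n+2) + α 1
  have hsH2 : s * (0.979 * μ) ≤ s * (x (n+2) + α 1) :=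
    mul_le_mul_of_nonneg_left hH2low hspos.le
  have hsH2' : 1.414 * (0.979 * μ) ≤ s * (0.979 * μ) :=
    mul_le_mul_of_nonneg_right hsl.le (by positivity)
  have hmx2 : μ * 0.797 ≤ μ * (-(x (n+2))) := by
    calc μ * 0.797 ≤ μ * (α 1 - 3*μ) := mul_le_mul_of_nonneg_left (by linarith) hμ0.le
      _ ≤ μ * (-(x (n+2))) := mul_le_mul_of_nonneg_left (by linarith) hμ0.le
  have hx3low : -(α (α 1)) + s * (x (n+2) + α 1) + μ * 0.797 - μ/100 ≤ x (n+3) := by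
    have h2 := hps2.2
    have he : s * (α 1 - -(x (n+2))) = s * (x (n+2) + α 1) := by ring
    have he2 : μ * (-(x (n+2))) = - (μ * x (n+2)) := by ring
    rw [he] at hax2ub
    linarith
  -- H3 := x (n+3) + α (α 1)
  have hH3low : 2.17 * μ ≤ x (n+3) + α (α 1) := by linarith
  have hH3ub : x (n+3) + α (α 1) ≤ 3*μ := by
    rw [hZ3eq] at hZx3; linarith [hZx3.2]
  have hx3neg : x (n+3) < 0 := by linarith
  have hx3ne : -(x (n+3)) ≠ 0 := by
    have : 0 < -(x (n+3)) := by linarith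
    positivity
  have hax3 : α (x (n+3)) = - α (-(x (n+3))) := by
    have := hodd (-(x (n+3))) hx3ne
    rw [neg_neg] at this; linarith
  have hab1 : α (α 1) ≤ 1 := by linarith
  have hax3ub : α (-(x (n+3))) + s * (α (α 1) - -(x (n+3))) ≤ α (α (α 1)) :=
    hmono (-(x (n+3))) (α (α 1)) (by linarith) (by linarith) hab1
  have hl3 := hlink (n+3) (by omega) hn3m
  have hZ4eq : Z (n+4) = -(α (α (α 1))) := by
    rw [← hl3, hZ3eq, hodd (α (α 1)) (by linarith)]
  have hZ4 := hZ (n+4) (by omega) (by omega)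
  have hZx4 := abs_le.mp hZ4.2
  have hps3 := abs_le.mp (hps (n+3) hn3m)
  -- final: -α(α(α1)) = Z(n+4) ≥ x (n+4) - 3μ ≥ -α(α(α1)) + s*H3 + μ(αα1 - 3μ) - μ/100 - 3μ
  have hsH3 : s * (2.17 * μ) ≤ s * (x (n+3) + α (α 1)) :=
    mul_le_mul_of_nonneg_left hH3low hspos.le
  have hsH3' : 1.414 * (2.17 * μ) ≤ s * (2.17 * μ) :=
    mul_le_mul_of_nonneg_right hsl.le (by positivity)
  have hmx3 : μ * 0.797 ≤ μ * (-(x (n+3))) := by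
    calc μ * 0.797 ≤ μ * (α (α 1) - 3*μ) := mul_le_mul_of_nonneg_left (by linarith) hμ0.le
      _ ≤ μ * (-(x (n+3))) := mul_le_mul_of_nonneg_left (by linarith) hμ0.le
  have hx4low : -(α (α (α 1))) + s * (x (n+3) + α (α 1)) + μ * 0.797 - μ/100 ≤ x (n+4) := by
    have h2 := hps3.2
    have he : s * (α (α 1) - -(x (n+3))) = s * (x (n+3) + α (α 1)) := by ring
    have he2 : μ * (-(x (n+3))) = - (μ * x (n+3)) := by ring
    rw [he] at hax3ub
    linarith
  have hfinal : x (n+4) ≤ -(α (α (α 1))) + 3*μ := by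
    rw [hZ4eq] at hZx4; linarith [hZx4.2]
  linarith

/-- Proposition 1(ii): finite δ-pseudo-orbits of α̂ = α − μ·id terminating at 0
are ε/8-shadowed by actual orbits of α hitting 0 exactly at time m. -/
theorem stmt13 (α : ℝ → ℝ)
    (hodd : ∀ x : ℝ, x ≠ 0 → α (-x) = -α x)
    (hmaps : ∀ x ∈ Set.Icc (-1 : ℝ) 1, x ≠ 0 → α x ∈ Set.Icc (-1 : ℝ) 1)
    (hdiff : ∀ x ∈ Set.Ioc (0 : ℝ) 1, DifferentiableAt ℝ α x)
    (hderiv : ∀ x ∈ Set.Ioc (0 : ℝ) 1, Real.sqrt 2 < deriv α x)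
    (hderiv2 : ∀ x ∈ Set.Ioc (0.8 : ℝ) 1, deriv α x < 2)
    (hlim : Filter.Tendsto α (nhdsWithin 0 (Set.Ioi 0)) (nhds (-1 : ℝ)))
    (hα : 0.8 < α (α 1) ∧ α (α 1) < α 1 ∧ α 1 < 1) :
    ∀ ε > (0 : ℝ), ∃ δ > (0 : ℝ), ∃ μ > (0 : ℝ),
      ∀ (m : ℕ) (x : ℕ → ℝ), (∀ n ≤ m, x n ∈ Set.Icc (-1 : ℝ) 1) →
        (∀ n < m, x n ≠ 0) → x m = 0 →
        (∀ n < m, |(α (x n) - μ * x n) - x (n + 1)| ≤ δ) →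
        ∃ z ∈ Set.Icc (-1 : ℝ) 1,
          (∀ n < m, α^[n] z ≠ 0) ∧ α^[m] z = 0 ∧
          ∀ n ≤ m, |α^[n] z - x n| ≤ ε / 8 := by
  obtain ⟨ha8, hab, ha1⟩ := hα
  intro ε hε
  have hs2 : Real.sqrt 2 ^ 2 = 2 := Real.sq_sqrt (by norm_num)
  have hsl : (1.414 : ℝ) < Real.sqrt 2 := by nlinarith [Real.sqrt_nonneg 2]
  have hcont : ∀ t ∈ Set.Ioc (0:ℝ) 1, ContinuousAt α t := fun t ht =>
    (hdiff t ht).continuousAt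
  have hmono : ∀ u v : ℝ, 0 < u → u ≤ v → v ≤ 1 → α u + Real.sqrt 2 * (v - u) ≤ α v := by
    intro u v hu huv hv
    rcases eq_or_lt_of_le huv with rfl | hlt
    · rw [sub_self, mul_zero, add_zero]
    · obtain ⟨c, hc, hcd⟩ := exists_deriv_eq_slope α hlt
        (fun t ht => ((hdiff t ⟨lt_of_lt_of_le hu ht.1, le_trans ht.2 hv⟩).continuousAt).continuousWithinAt)
        (fun t ht => (hdiff t ⟨lt_trans hu ht.1, le_of_lt (lt_of_lt_of_le ht.2 hv)⟩).differentiableWithinAt)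
      have hder := hderiv c ⟨lt_trans hu hc.1, le_trans hc.2.le hv⟩
      rw [hcd, lt_div_iff₀ (by linarith)] at hder
      linarith
  set μ := min (ε/24) (1/1000) with hμdef
  have hμ0 : 0 < μ := lt_min (by linarith) (by norm_num)
  have hμ1 : μ ≤ 1/1000 := min_le_right _ _
  have hμε : μ ≤ ε/24 := min_le_left _ _
  refine ⟨μ/100, by positivity, μ, hμ0, ?_⟩
  intro m x hxmem hxne hxm0 hpseudo
  have hxm' : ∀ k, k ≤ m → -1 ≤ x k ∧ x k ≤ 1 := fun k hk =>
    ⟨(hxmem k hk).1, (hxmem k hk).2⟩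
  have hps' : ∀ k, k < m → |α (x k) - μ * x k - x (k+1)| ≤ μ/100 := by
    intro k hk
    have := hpseudo k hk
    calc |α (x k) - μ * x k - x (k+1)| = |(α (x k) - μ * x k) - x (k+1)| := by ring_nf
      _ ≤ μ/100 := this
  -- backward construction
  have key : ∀ j : ℕ, j ≤ m → ∃ Z : ℕ → ℝ, Z m = 0 ∧
      (∀ k, m - j ≤ k → k ≤ m → ((-1 ≤ Z k ∧ Z k ≤ 1) ∧ |Z k - x k| ≤ 3*μ)) ∧
      (∀ k, m - j ≤ k → k < m → (Z k ≠ 0 ∧ α (Z k) = Z (k+1))) := by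
    intro j
    induction j with
    | zero =>
      intro _
      refine ⟨fun _ => 0, rfl, ?_, ?_⟩
      · intro k hk1 hk2
        have hk : k = m := by omega
        subst hk
        refine ⟨⟨by norm_num, by norm_num⟩, ?_⟩
        have h30 : (0:ℝ) ≤ 3*μ := by positivity
        rw [hxm0]
        simpa using h30
      · intro k hk1 hk2; omega
    | succ j ih =>
      intro hj
      obtain ⟨Z, hZm, hZbd, hZlk⟩ := ih (by omega)
      set n := m - (j+1) with hndef
      have hnm : n < m := by omega
      have hmj : m - j = n + 1 := by omega
      rw [hmj] at hZbd hZlk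
      have hlink' : ∀ k, n + 1 ≤ k → k < m → α (Z k) = Z (k+1) := fun k h1 h2 =>
        (hZlk k h1 h2).2
      have hn1le : n + 1 ≤ m := hnm
      have hZx1 := (hZbd (n+1) le_rfl hn1le).2
      have hxnb := hxm' n hnm.le
      -- |Z (n+1) - α (x n)| ≤ √2 * (3 μ)
      have hclose0 : |Z (n+1) - α (x n)| ≤ Real.sqrt 2 * (3*μ) := by
        have a1 := abs_le.mp hZx1
        have a2 := abs_le.mp (hps' n hnm)
        have a3 : μ * x n ≤ μ * 1 := mul_le_mul_of_nonneg_left hxnb.2 hμ0.le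
        have a4 : μ * (-1) ≤ μ * x n := mul_le_mul_of_nonneg_left hxnb.1 hμ0.le
        have a5 : 1.414 * (3*μ) ≤ Real.sqrt 2 * (3*μ) :=
          mul_le_mul_of_nonneg_right hsl.le (by positivity)
        rw [abs_le]
        constructor <;> linarith
      rcases (hxne n hnm).lt_or_gt with hneg | hpos
      · -- negative side: mirror
        have hx0' : 0 < -(x n) := by linarith
        have hxm'' : ∀ k, k ≤ m → -1 ≤ -(x k) ∧ -(x k) ≤ 1 := by
          intro k hk; have := hxm' k hk; constructor <;> linarith [this.1, this.2]
        have hps'' : ∀ k, k < m → |α (-(x k)) - μ * (-(x k)) - (-(x (k+1)))| ≤ μ/100 := by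
          intro k hk
          have he : α (-(x k)) - μ * (-(x k)) - (-(x (k+1)))
              = -(α (x k) - μ * x k - x (k+1)) := by
            rw [hodd _ (hxne k hk)]; ring
          rw [he, abs_neg]; exact hps' k hk
        have hZ'' : ∀ k, n + 1 ≤ k → k ≤ m →
            ((-1 ≤ -(Z k) ∧ -(Z k) ≤ 1) ∧ |(-(Z k)) - (-(x k))| ≤ 3*μ) := by
          intro k h1 h2
          have := hZbd k h1 h2
          have he : -(Z k) - (-(x k)) = -(Z k - x k) := by ring
          rw [he, abs_neg]
          exact ⟨⟨by linarith [this.1.2], by linarith [this.1.1]⟩, this.2⟩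
        have hlink'' : ∀ k, n + 1 ≤ k → k < m → α (-(Z k)) = -(Z (k+1)) := by
          intro k h1 h2
          rw [hodd _ (hZlk k h1 h2).1, (hZlk k h1 h2).2]
        have hZm'' : -(Z m) = 0 := by rw [hZm]; ring
        have hyle := claimA α hmono ha8 hab ha1 μ hμ0 hμ1 m n (fun k => -(x k))
          (fun k => -(Z k)) hnm hx0' hxm'' hps'' hZ'' hlink'' hZm''
        have hygt := claimB α hodd hmono ha8 hab ha1 μ hμ0 hμ1 m n (fun k => -(x k))
          (fun k => -(Z k)) hnm hxm'' hps'' hZ'' hlink'' hZm''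
        beta_reduce at hyle hygt
        have hclose' : |(-(Z (n+1))) - α (-(x n))| ≤ Real.sqrt 2 * (3*μ) := by
          have he : (-(Z (n+1))) - α (-(x n)) = -(Z (n+1) - α (x n)) := by
            rw [hodd _ (hxne n hnm)]; ring
          rw [he, abs_neg]; exact hclose0
        obtain ⟨z', hz'0, hz'1, hz'eq, hz'cl⟩ := stepPos α hcont hmono hlim (3*μ)
          (by positivity) (-(x n)) (-(Z (n+1))) hx0' (by linarith [hxnb.1]) hygt hyle hclose'
        refine ⟨Function.update Z n (-z'), ?_, ?_, ?_⟩
        · rw [Function.update_of_ne (by omega : m ≠ n)]; exact hZm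
        · intro k hk1 hk2
          rcases eq_or_ne k n with rfl | hne
          · rw [Function.update_self]
            have he : -z' - x n = -(z' - (-(x n))) := by ring
            refine ⟨⟨by linarith, by linarith⟩, ?_⟩
            rw [he, abs_neg]; exact hz'cl
          · rw [Function.update_of_ne hne]; exact hZbd k (by omega) hk2
        · intro k hk1 hk2
          rcases eq_or_ne k n with rfl | hne
          · rw [Function.update_self, Function.update_of_ne (by omega : n+1 ≠ n)]
            refine ⟨neg_ne_zero.mpr (ne_of_gt hz'0), ?_⟩
            rw [hodd z' (by linarith)]  -- α (-z') = -α z'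
            rw [hz'eq]; ring
          · rw [Function.update_of_ne hne, Function.update_of_ne (by omega : k+1 ≠ n)]
            exact hZlk k (by omega) hk2
      · -- positive side
        have hyle := claimA α hmono ha8 hab ha1 μ hμ0 hμ1 m n x Z hnm hpos hxm' hps'
          hZbd hlink' hZm
        have hygt := claimB α hodd hmono ha8 hab ha1 μ hμ0 hμ1 m n x Z hnm hxm' hps'
          hZbd hlink' hZm
        obtain ⟨z, hz0, hz1, hzeq, hzcl⟩ := stepPos α hcont hmono hlim (3*μ)
          (by positivity) (x n) (Z (n+1)) hpos hxnb.2 hygt hyle hclose0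
        refine ⟨Function.update Z n z, ?_, ?_, ?_⟩
        · rw [Function.update_of_ne (by omega : m ≠ n)]; exact hZm
        · intro k hk1 hk2
          rcases eq_or_ne k n with rfl | hne
          · rw [Function.update_self]
            exact ⟨⟨by linarith, hz1⟩, hzcl⟩
          · rw [Function.update_of_ne hne]; exact hZbd k (by omega) hk2
        · intro k hk1 hk2
          rcases eq_or_ne k n with rfl | hne
          · rw [Function.update_self, Function.update_of_ne (by omega : n+1 ≠ n)]
            exact ⟨ne_of_gt hz0, hzeq⟩
          · rw [Function.update_of_ne hne, Function.update_of_ne (by omega : k+1 ≠ n)]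
            exact hZlk k (by omega) hk2
  obtain ⟨Z, hZm0, hbd, hlk⟩ := key m le_rfl
  have h00 : m - m = 0 := Nat.sub_self m
  rw [h00] at hbd hlk
  have horb : ∀ k, k ≤ m → α^[k] (Z 0) = Z k := by
    intro k
    induction k with
    | zero => intro _; simp
    | succ k ihk =>
      intro hk
      rw [Function.iterate_succ_apply', ihk (by omega), (hlk k (by omega) (by omega)).2]
  have hZ0bd := hbd 0 (by omega) (by omega)
  refine ⟨Z 0, ⟨hZ0bd.1.1, hZ0bd.1.2⟩, ?_, ?_, ?_⟩
  · intro k hk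
    rw [horb k hk.le]
    exact (hlk k (by omega) hk).1
  · rw [horb m le_rfl]; exact hZm0
  · intro k hk
    rw [horb k hk]
    have := (hbd k (by omega) hk).2
    linarith
end
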